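/- Suppose p_s : X × Z → ℝ, p_sZ : Z → ℝ, p_t : X → ℝ, pt_tilde : Z → ℝ, G_x : X × Z → ℝ and G_z : X × Z → ℝ are real-valued functions such that for all x : X and z : Z, (i) p_s (x, z) = G_x (x, z) * p_sZ z (the source-domain GAN convergence condition) and (ii) G_x (x, z) * pt_tilde z = G_z (x, z) * p_t x (the target-domain ALI convergence condition). Then for every x : X and z : Z with p_sZ z ≠ 0 and p_t x ≠ 0, the encoder satisfies G_z (x, z) = (p_s (x, z) * pt_tilde z) / (p_sZ z * p_t x). -/

import Mathlib

/-- **TAN Proposition 1 (global optimality of the encoder).**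
If for all `x, z` the source-domain GAN convergence condition
`p_s (x, z) = G_x (x, z) * p_sZ z` and the target-domain ALI convergence condition
`G_x (x, z) * pt_tilde z = G_z (x, z) * p_t x` hold, then wherever `p_sZ z ≠ 0`
and `p_t x ≠ 0` the encoder satisfies
`G_z (x, z) = (p_s (x, z) * pt_tilde z) / (p_sZ z * p_t x)`. -/
theorem tan_encoder_global_optimum {X Z : Type*}
    (p_s : X × Z → ℝ) (p_sZ : Z → ℝ) (p_t : X → ℝ) (pt_tilde : Z → ℝ)
    (G_x G_z : X × Z → ℝ)
    (hsource : ∀ (x : X) (z : Z), p_s (x, z) = G_x (x, z) * p_sZ z)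
    (htarget : ∀ (x : X) (z : Z), G_x (x, z) * pt_tilde z = G_z (x, z) * p_t x) :
    ∀ (x : X) (z : Z), p_sZ z ≠ 0 → p_t x ≠ 0 →
      G_z (x, z) = (p_s (x, z) * pt_tilde z) / (p_sZ z * p_t x) := by
  intro x z hz hx
  have hG_x : G_x (x, z) = p_s (x, z) / p_sZ z := by
    rw [hsource, mul_div_cancel_right₀ _ hz]
  calc G_z (x, z) = G_x (x, z) * pt_tilde z / p_t x := by
        rw [eq_div_iff hx, htarget]
    _ = (p_s (x, z) * pt_tilde z) / (p_sZ z * p_t x) := by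
        rw [hG_x, div_mul_eq_mul_div, div_div]
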